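/- Let p be an odd prime and H an abelian subgroup of GL₂(𝔽ₚ) whose order is divisible by p. Then H is cyclic and is generated, up to conjugation in GL₂(𝔽ₚ), by a matrix of the form [[a,1],[0,a]] with a ∈ 𝔽ₚˣ. -/

import Mathlib

/-!
An element `u ∈ H` of order `p` satisfies `(u - 1)^p = 0`, so `u - 1` is a nonzero square-zero
matrix and `u` is conjugate to the transvection `J = [[1,1],[0,1]]`. As `H` is abelian, after this
conjugation `H` lies in the centralizer of `J`, which is the image of the injective homomorphism
`(a, t) ↦ a • [[1,t],[0,1]]` from `𝔽ₚˣ × 𝔽ₚ`; that group is cyclic, its factors having coprime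
orders `p - 1` and `p`. So `H` is generated by some `a • [[1,t],[0,1]]`, where `t ≠ 0` because
`J ∈ H`, and conjugating by a diagonal matrix turns the generator into `[[a,1],[0,a]]`.
-/

open Matrix

theorem Matrix.pow_card_eq_zero_of_isNilpotent {n R : Type*} [Fintype n] [DecidableEq n]
    [CommRing R] [IsDomain R] {N : Matrix n n R} (hN : IsNilpotent N) :
    N ^ Fintype.card n = 0 := by
  have hchar : N.charpoly = Polynomial.X ^ Fintype.card n :=
    sub_eq_zero.mp (isNilpotent_charpoly_sub_pow_of_isNilpotent hN).eq_zero
  simpa [hchar] using aeval_self_charpoly N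

theorem Subgroup.exists_zpowers_eq_of_le_range {G G' : Type*} [Group G] [Group G'] [IsCyclic G]
    {f : G →* G'} {H : Subgroup G'} (hH : H ≤ f.range) : ∃ g : G, zpowers (f g) = H := by
  obtain ⟨g, hg⟩ := (comap f H).isCyclic_iff_exists_zpowers_eq_top.mp inferInstance
  exact ⟨g, by rw [← MonoidHom.map_zpowers, hg, map_comap_eq_self hH]⟩

instance ZMod.isCyclic_units_prod_multiplicative (p : ℕ) [Fact p.Prime] :
    IsCyclic ((ZMod p)ˣ × Multiplicative (ZMod p)) := by
  refine Group.isCyclic_prod_iff.mpr ⟨inferInstance, inferInstance, ?_⟩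
  rw [Nat.card_eq_fintype_card, ZMod.card_units, Nat.card_eq_fintype_card,
    Fintype.card_multiplicative, ZMod.card]
  exact (Nat.coprime_self_sub_left (Fact.out : p.Prime).one_le).mpr (Nat.coprime_one_left p)

namespace Matrix.GeneralLinearGroup

variable {K : Type*} [Field K]

/-- Its range is the centralizer of the transvection `[[1, 1], [0, 1]]`. -/
def scalarTransvection : Kˣ × Multiplicative K →* GL (Fin 2) K where
  toFun x :=
    { val := !![(x.1 : K), x.1 * x.2.toAdd; 0, x.1]
      inv := !![((x.1⁻¹ : Kˣ) : K), -(x.1⁻¹ : Kˣ) * x.2.toAdd; 0, (x.1⁻¹ : Kˣ)]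
      val_inv := by
        ext i j; fin_cases i <;> fin_cases j <;> simp [mul_apply]; field_simp; ring
      inv_val := by
        ext i j; fin_cases i <;> fin_cases j <;> simp [mul_apply]; field_simp; ring }
  map_one' := by ext i j; fin_cases i <;> fin_cases j <;> simp
  map_mul' x y := by ext i j; fin_cases i <;> fin_cases j <;> simp [mul_apply]; ring

@[simp]
theorem coe_scalarTransvection (x : Kˣ × Multiplicative K) :
    (scalarTransvection x : Matrix (Fin 2) (Fin 2) K) = !![(x.1 : K), x.1 * x.2.toAdd; 0, x.1] :=
  rfl

theorem scalarTransvection_injective : Function.Injective (scalarTransvection (K := K)) := by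
  intro x y h
  have h01 := congrArg (fun g : GL (Fin 2) K => (g : Matrix (Fin 2) (Fin 2) K) 0 1) h
  have h00 : x.1 = y.1 := Units.ext <| by
    simpa using congrArg (fun g : GL (Fin 2) K => (g : Matrix (Fin 2) (Fin 2) K) 0 0) h
  simp only [coe_scalarTransvection, of_apply, cons_val', cons_val_zero, cons_val_one,
    empty_val', cons_val_fin_one, h00, mul_right_inj' y.1.ne_zero] at h01
  exact Prod.ext h00 h01

theorem mem_range_scalarTransvection_of_commute {X : GL (Fin 2) K}
    (hX : Commute X (scalarTransvection (1, .ofAdd 1))) :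
    X ∈ (scalarTransvection (K := K)).range := by
  set x := (X : Matrix (Fin 2) (Fin 2) K)
  obtain ⟨h10, h11⟩ : x 1 0 = 0 ∧ x 1 1 = x 0 0 := by
    have h := congrArg Units.val hX.eq
    simp [← Matrix.ext_iff, Fin.forall_fin_two, mul_apply, vecMul, dotProduct] at h
    grind
  have h00 : x 0 0 ≠ 0 := fun h =>
    (X.isUnit.map detMonoidHom).ne_zero (by simp [x, det_fin_two, h, h10])
  refine ⟨(Units.mk0 _ h00, .ofAdd (x 0 1 / x 0 0)), Units.ext ?_⟩
  ext i j; fin_cases i <;> fin_cases j <;> simp [x, h10, h11, mul_div_cancel₀ _ h00]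

theorem snd_ne_one_of_transvection_mem_zpowers {x : Kˣ × Multiplicative K}
    (h : scalarTransvection (1, .ofAdd 1) ∈ Subgroup.zpowers (scalarTransvection x)) :
    x.2 ≠ 1 := by
  obtain ⟨k, hk⟩ := Subgroup.mem_zpowers_iff.mp h
  rw [← map_zpow] at hk
  intro h1
  have := congrArg (fun y => y.2.toAdd) (scalarTransvection_injective hk)
  simp [h1] at this

theorem exists_conj_scalarTransvection_eq (a : Kˣ) {s t : Multiplicative K} (hs : s ≠ 1)
    (ht : t ≠ 1) :
    ∃ D : GL (Fin 2) K,
      MulAut.conj D (scalarTransvection (a, s)) = scalarTransvection (a, t) := by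
  replace hs : s.toAdd ≠ 0 := hs
  replace ht : t.toAdd ≠ 0 := ht
  refine ⟨mkOfDetNeZero !![t.toAdd / s.toAdd, 0; 0, 1] (by simp [det_fin_two, hs, ht]), ?_⟩
  rw [MulAut.conj_apply, mul_inv_eq_iff_eq_mul]
  ext i j
  fin_cases i <;> fin_cases j <;> simp [mul_apply] <;> field_simp

theorem exists_conj_eq_transvection {A : GL (Fin 2) K}
    (hA : ((A : Matrix (Fin 2) (Fin 2) K) - 1) ^ 2 = 0) (hA1 : A ≠ 1) :
    ∃ M : GL (Fin 2) K, MulAut.conj M A = scalarTransvection (1, .ofAdd 1) := by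
  set N := (A : Matrix (Fin 2) (Fin 2) K) - 1 with hN
  obtain ⟨v, hv⟩ : ∃ v, N *ᵥ v ≠ 0 := by
    by_contra! h
    refine hA1 (Units.ext (sub_eq_zero.mp (ext_of_mulVec_single fun j => ?_)))
    rw [zero_mulVec]
    exact h _
  set w := N *ᵥ v
  have hNw : N *ᵥ w = 0 := by rw [mulVec_mulVec, ← sq, hA, zero_mulVec]
  have hA' : (A : Matrix (Fin 2) (Fin 2) K) = N + 1 := by rw [hN, sub_add_cancel]
  have hAw : (A : Matrix (Fin 2) (Fin 2) K) *ᵥ w = w := by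
    rw [hA', add_mulVec, one_mulVec, hNw, zero_add]
  have hAv : (A : Matrix (Fin 2) (Fin 2) K) *ᵥ v = w + v := by
    rw [hA', add_mulVec, one_mulVec]
  have hind : LinearIndependent K ![w, v] := by
    refine LinearIndependent.pair_iff.mpr fun s t hst => ?_
    obtain rfl : t = 0 := by
      have := congrArg (N *ᵥ ·) hst
      simp only [mulVec_add, mulVec_smul, hNw, smul_zero, zero_add, mulVec_zero] at this
      exact (smul_eq_zero.mp this).resolve_right hv
    simpa [hv] using hst
  have hP : IsUnit (of ![w, v])ᵀ := linearIndependent_cols_iff_isUnit.mp hind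
  have hAP :
      (A : Matrix (Fin 2) (Fin 2) K) * (of ![w, v])ᵀ = (of ![w, v])ᵀ * !![1, 1; 0, 1] := by
    ext i j
    have hw := congrFun hAw i
    have hv := congrFun hAv i
    fin_cases i <;> fin_cases j <;>
      simp [mul_apply, mulVec, dotProduct, add_comm] at hw hv ⊢ <;> assumption
  refine ⟨hP.unit⁻¹, ?_⟩
  rw [MulAut.conj_apply, inv_inv, mul_assoc, inv_mul_eq_iff_eq_mul]
  ext : 1
  simpa using hAP

theorem exists_conj_eq_transvection_of_orderOf_eq (p : ℕ) [Fact p.Prime] [CharP K p]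
    {A : GL (Fin 2) K} (hA : orderOf A = p) :
    ∃ M : GL (Fin 2) K, MulAut.conj M A = scalarTransvection (1, .ofAdd 1) := by
  have hAp : (A : Matrix (Fin 2) (Fin 2) K) ^ p = 1 := by
    rw [← Units.val_pow_eq_pow_val, ← hA, pow_orderOf_eq_one, Units.val_one]
  have hN : ((A : Matrix (Fin 2) (Fin 2) K) - 1) ^ p = 0 := by
    rw [sub_pow_char_of_commute p (Commute.one_right _), hAp, one_pow, sub_self]
  refine exists_conj_eq_transvection (by simpa using pow_card_eq_zero_of_isNilpotent ⟨p, hN⟩) ?_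
  rintro rfl
  exact (Fact.out : p.Prime).one_lt.ne (orderOf_one.symm.trans hA)

end Matrix.GeneralLinearGroup

open Matrix.GeneralLinearGroup in
theorem stmt3_general {p : ℕ} [Fact p.Prime] (H : Subgroup (GL (Fin 2) (ZMod p)))
    (hab : ∀ a ∈ H, ∀ b ∈ H, a * b = b * a) (hord : p ∣ Nat.card H) :
    IsCyclic H ∧
      ∃ (M : GL (Fin 2) (ZMod p)) (g : GL (Fin 2) (ZMod p)) (a : (ZMod p)ˣ),
        (g : Matrix (Fin 2) (Fin 2) (ZMod p)) = !![(a : ZMod p), 1; 0, (a : ZMod p)] ∧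
          Subgroup.map (MulAut.conj M).toMonoidHom H = Subgroup.zpowers g := by
  obtain ⟨u, hu⟩ := exists_prime_orderOf_dvd_card' p hord
  obtain ⟨M, hM⟩ := exists_conj_eq_transvection_of_orderOf_eq p
    ((orderOf_injective H.subtype H.subtype_injective u).trans hu)
  have hle : H.map (MulAut.conj M).toMonoidHom ≤ scalarTransvection.range := by
    rintro _ ⟨y, hy, rfl⟩
    exact mem_range_scalarTransvection_of_commute (hM ▸ Commute.map (hab y hy u u.2) _)
  obtain ⟨⟨a, t⟩, hx⟩ := Subgroup.exists_zpowers_eq_of_le_range hle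
  have ht : t ≠ 1 :=
    snd_ne_one_of_transvection_mem_zpowers (by rw [hx]; exact ⟨u, u.2, hM⟩)
  obtain ⟨D, hD⟩ := exists_conj_scalarTransvection_eq a ht
    (t := .ofAdd ↑a⁻¹) (ofAdd_eq_one.not.mpr a⁻¹.ne_zero)
  have hmap : H.map (MulAut.conj (D * M)).toMonoidHom =
      Subgroup.zpowers (scalarTransvection (a, .ofAdd ↑a⁻¹)) := by
    rw [← hD, ← MulEquiv.coe_toMonoidHom, ← MonoidHom.map_zpowers, hx, Subgroup.map_map,
      map_mul]
    rfl
  refine ⟨?_, D * M, _, a, by rw [coe_scalarTransvection, toAdd_ofAdd, Units.mul_inv], hmap⟩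
  let e := H.equivMapOfInjective (MulAut.conj (D * M)).toMonoidHom (MulAut.conj (D * M)).injective
  rw [e.isCyclic, hmap]
  infer_instance

/-- Let `p` be an odd prime and `H` an abelian subgroup of `GL₂(𝔽ₚ)` whose order is divisible
by `p`.  Then `H` is cyclic and is generated, up to conjugation in `GL₂(𝔽ₚ)`, by a matrix of
the form `[[a,1],[0,a]]` with `a ∈ 𝔽ₚˣ`. -/
theorem stmt3 {p : ℕ} [Fact p.Prime] (hp : Odd p) (H : Subgroup (GL (Fin 2) (ZMod p)))
    (hab : ∀ a ∈ H, ∀ b ∈ H, a * b = b * a) (hord : p ∣ Nat.card H) :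
    IsCyclic H ∧
      ∃ (M : GL (Fin 2) (ZMod p)) (g : GL (Fin 2) (ZMod p)) (a : (ZMod p)ˣ),
        (g : Matrix (Fin 2) (Fin 2) (ZMod p)) = !![(a : ZMod p), 1; 0, (a : ZMod p)] ∧
          Subgroup.map (MulAut.conj M).toMonoidHom H = Subgroup.zpowers g :=
  stmt3_general H hab hord
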